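/- arXiv:2303.08725 — 2 statements merged into one kernel-verified Lean document; each statement's English description precedes it below -/
import Mathlib

section
/- For every scoring matrix γ: dist_γ(s,s) = 0 for all s ∈ Σ* if and only if (i) D(γ) has no negative cycle, and (ii) for every a ∈ Σ, γ(a,a) = 0 or γ(a,‐) + γ(‐,a) = 0. -/
/-!
The columns of an alignment of `s` with itself are arcs of `D(γ)`, and every vertex, the space
included, is the tail of as many columns as it is the head of. Repeatedly concatenating a walk
that is not closed with one starting at its end splits the columns into closed walks; so the
score is a sum of cycle weights, nonnegative when `D(γ)` has no negative cycle, and condition (ii)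
supplies an alignment of score zero letter by letter.

Conversely, an alignment of `[a]` with itself scores `γ(a,a)` or `γ(a,‐) + γ(‐,a)`, and a
negative cycle through `a` run `n` times, framed by the columns `(‐,a)` and `(a,‐)`, is an
alignment of a sequence with itself whose score tends to `-∞`.
-/

open List

/-- A scoring matrix on alphabet `σ`; `none` represents the space symbol `‐`.
The value at `(none, none)` is irrelevant (never used on admissible columns). -/
abbrev Scoring (σ : Type*) := Option σ → Option σ → ℝ

/-- `A` is an alignment of the sequences `s` and `t`: a list of columns over
`Σ₋ × Σ₋` with no column `(‐,‐)`, whose first (resp. second) components with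
spaces removed spell `s` (resp. `t`). -/
def IsAlignment {σ : Type*} (A : List (Option σ × Option σ)) (s t : List σ) : Prop :=
  (∀ c ∈ A, c ≠ ((none : Option σ), (none : Option σ))) ∧
  A.filterMap Prod.fst = s ∧ A.filterMap Prod.snd = t

/-- The score of an alignment: the sum of `γ` over its columns. -/
def alignScore {σ : Type*} (γ : Scoring σ) (A : List (Option σ × Option σ)) : ℝ :=
  (A.map fun c => γ c.1 c.2).sum

/-- The weighted edit distance: minimum alignment score. -/
noncomputable def editDist {σ : Type*} (γ : Scoring σ) (s t : List σ) : ℝ :=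
  sInf {x | ∃ A, IsAlignment A s t ∧ alignScore γ A = x}

/-- The normalized edit distance: minimum normalized alignment score
(score divided by number of columns); for `s = t = ε` it is `0`. -/
noncomputable def ndist {σ : Type*} (γ : Scoring σ) (s t : List σ) : ℝ :=
  sInf {x | ∃ A, IsAlignment A s t ∧ alignScore γ A / (A.length : ℝ) = x}

/-- A walk in the digraph `D(γ)`: a list of vertices of `Σ₋` in which the
space `‐` never follows the space. -/
def IsWalkSeq {σ : Type*} (W : List (Option σ)) : Prop :=
  W.Chain' (fun a b => ¬(a = none ∧ b = none))

/-- The weight of a walk: the sum of the weights of its consecutive arcs. -/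
def walkWeight {σ : Type*} (γ : Scoring σ) (W : List (Option σ)) : ℝ :=
  ((W.zip W.tail).map fun p => γ p.1 p.2).sum

/-- `D(γ)` has a cycle of negative total weight (cycles start and end at a
vertex of `Σ`). -/
def HasNegCycle {σ : Type*} (γ : Scoring σ) : Prop :=
  ∃ (a : σ) (W : List (Option σ)),
    IsWalkSeq (some a :: (W ++ [some a])) ∧
    walkWeight γ (some a :: (W ++ [some a])) < 0

/-- The shortest-walk distance from `x` to `y` in `D(γ)`. -/
noncomputable def walkDist {σ : Type*} (γ : Scoring σ) (x y : Option σ) : ℝ :=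
  sInf {w | ∃ W : List (Option σ), IsWalkSeq W ∧ W.head? = some x ∧
    W.getLast? = some y ∧ walkWeight γ W = w}

/-- A column of an extended alignment: a nonempty sequence over `Σ₋`, with at
least one non-space symbol, no two consecutive spaces, and not having a space
at both ends. -/
def IsExtCol {σ : Type*} (c : List (Option σ)) : Prop :=
  c ≠ [] ∧ (∃ x ∈ c, x ≠ none) ∧
  c.Chain' (fun a b => ¬(a = none ∧ b = none)) ∧
  ¬(c.head? = some none ∧ c.getLast? = some none)

/-- An extended alignment of `s, t`: a list of admissible columns whose first
symbols (spaces removed) spell `s` and whose last symbols spell `t`. -/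
def IsExtAlignment {σ : Type*} (E : List (List (Option σ))) (s t : List σ) : Prop :=
  (∀ c ∈ E, IsExtCol c) ∧
  E.filterMap (fun c => c.head?.bind id) = s ∧
  E.filterMap (fun c => c.getLast?.bind id) = t

/-- The extended edit distance: minimum total score over extended alignments,
where the score of a column is the sum of `γ` over its consecutive pairs. -/
noncomputable def edist {σ : Type*} (γ : Scoring σ) (s t : List σ) : ℝ :=
  sInf {x | ∃ E, IsExtAlignment E s t ∧ (E.map (walkWeight γ)).sum = x}

/-- `f` is a premetric: `f x x = 0` and `f x y ≥ 0`. -/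
def IsPremetric {σ : Type*} (f : List σ → List σ → ℝ) : Prop :=
  (∀ s, f s s = 0) ∧ (∀ s t, 0 ≤ f s t)

lemma List.map_fst_zip_tail {α : Type*} (l : List α) :
    (l.zip l.tail).map Prod.fst = l.dropLast := by
  induction l with
  | nil => rfl
  | cons x l ih => cases l <;> simp_all

lemma List.IsChain.rel_of_mem_zip_tail {α : Type*} {R : α → α → Prop} {l : List α}
    (h : l.IsChain R) {p : α × α} (hp : p ∈ l.zip l.tail) : R p.1 p.2 := by
  induction l with
  | nil => simp at hp
  | cons x l ih =>
    rcases l with _ | ⟨y, l⟩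
    · simp at hp
    rw [isChain_cons_cons] at h
    rcases mem_cons.1 hp with rfl | hp
    · exact h.1
    · exact ih h.2 hp

lemma List.perm_of_reduceOption_eq_of_length_eq {α : Type*} {l₁ l₂ : List (Option α)}
    (h : l₁.reduceOption = l₂.reduceOption) (hlen : l₁.length = l₂.length) : l₁ ~ l₂ := by
  classical
  have count_some (l : List (Option α)) (a : α) : l.count (some a) = l.reduceOption.count a := by
    induction l with
    | nil => simp
    | cons x l ih => cases x <;> simp [count_cons, ih]
  have count_none (l : List (Option α)) : l.count none = l.length - l.reduceOption.length := by
    rw [length_eq_reduceOption_length_add_filter_none, count_eq_length_filter]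
    simp
  refine perm_iff_count.2 fun x => ?_
  cases x with
  | none => rw [count_none, count_none, h, hlen]
  | some a => rw [count_some, count_some, h]

section Walks

variable {σ : Type*} (γ : Scoring σ)

@[simp] lemma walkWeight_nil : walkWeight γ [] = 0 := rfl

@[simp] lemma walkWeight_singleton (x : Option σ) : walkWeight γ [x] = 0 := rfl

@[simp] lemma walkWeight_cons_cons (x y : Option σ) (l : List (Option σ)) :
    walkWeight γ (x :: y :: l) = γ x y + walkWeight γ (y :: l) := by
  simp [walkWeight]

lemma walkWeight_append_cons (l : List (Option σ)) (x : Option σ) (r : List (Option σ)) :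
    walkWeight γ (l ++ x :: r) = walkWeight γ (l ++ [x]) + walkWeight γ (x :: r) := by
  induction l with
  | nil => simp
  | cons y l ih =>
    cases l with
    | nil => simp
    | cons z l => simp only [cons_append, walkWeight_cons_cons] at ih ⊢; rw [ih, add_assoc]

lemma isWalkSeq_cons_cons {x y : Option σ} {l : List (Option σ)} :
    IsWalkSeq (x :: y :: l) ↔ ¬(x = none ∧ y = none) ∧ IsWalkSeq (y :: l) :=
  isChain_cons_cons

lemma IsWalkSeq.append_cons {l r : List (Option σ)} {x : Option σ}
    (hl : IsWalkSeq (l ++ [x])) (hr : IsWalkSeq (x :: r)) : IsWalkSeq (l ++ x :: r) := by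
  rw [show l ++ x :: r = l ++ [x] ++ r by simp]
  exact IsChain.append_overlap hl hr (cons_ne_nil x [])

lemma walkWeight_rotate (x y : Option σ) (l : List (Option σ)) :
    walkWeight γ (y :: (l ++ [x, y])) = walkWeight γ (x :: y :: (l ++ [x])) := by
  rw [show y :: (l ++ [x, y]) = (y :: l) ++ x :: [y] by simp, walkWeight_append_cons]
  simp [add_comm]

lemma IsWalkSeq.rotate {x y : Option σ} {l : List (Option σ)}
    (h : IsWalkSeq (x :: y :: (l ++ [x]))) : IsWalkSeq (y :: (l ++ [x, y])) := by
  rw [isWalkSeq_cons_cons, ← cons_append] at h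
  rw [show y :: (l ++ [x, y]) = (y :: l) ++ x :: [y] by simp]
  exact h.2.append_cons (isWalkSeq_cons_cons.2 ⟨h.1, isChain_singleton _⟩)

end Walks

section BalancedFamilies

variable {σ : Type*} {γ : Scoring σ}

lemma walkWeight_nonneg_of_head?_eq_getLast? (hγ : ¬ HasNegCycle γ) {W : List (Option σ)}
    (hW : IsWalkSeq W) (hclosed : W.head? = W.getLast?) : 0 ≤ walkWeight γ W := by
  rcases W with _ | ⟨x, r⟩
  · simp
  rcases r.eq_nil_or_concat' with rfl | ⟨M, z, rfl⟩
  · simp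
  obtain rfl : x = z := by
    rw [← cons_append, getLast?_concat, cons_append, head?_cons, Option.some_inj] at hclosed
    exact hclosed
  rcases x with _ | a
  · -- `HasNegCycle` only speaks of cycles through a letter: rotate to start at one.
    rcases M with _ | ⟨m, M⟩
    · exact absurd (isWalkSeq_cons_cons.1 hW).1 (by simp)
    obtain ⟨b, rfl⟩ : ∃ b, m = some b :=
      Option.ne_none_iff_exists'.1 fun hm => (isWalkSeq_cons_cons.1 hW).1 ⟨rfl, hm⟩
    rw [cons_append] at hW ⊢
    have hrot := hW.rotate
    rw [← walkWeight_rotate]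
    by_contra hneg
    exact hγ ⟨b, M ++ [none], by simpa using hrot, by simpa using not_le.1 hneg⟩
  · by_contra hneg
    exact hγ ⟨a, M, hW, not_le.1 hneg⟩

def IsBalancedWalkFamily (E : List (List (Option σ))) : Prop :=
  (∀ W ∈ E, IsWalkSeq W) ∧ E.map head? ~ E.map getLast?

lemma IsBalancedWalkFamily.exists_merge {W : List (Option σ)} {E : List (List (Option σ))}
    (h : IsBalancedWalkFamily (W :: E)) (hopen : W.head? ≠ W.getLast?) :
    ∃ F, F.length = E.length ∧ IsBalancedWalkFamily F ∧
      (F.map (walkWeight γ)).sum = ((W :: E).map (walkWeight γ)).sum := by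
  classical
  obtain ⟨hwalk, hperm⟩ := h
  obtain ⟨W, y, rfl⟩ : ∃ W' y, W = W' ++ [y] := by
    rcases W.eq_nil_or_concat' with rfl | hW
    · simp at hopen
    · exact hW
  obtain ⟨V, hVE, hVy⟩ : ∃ V ∈ E, V.head? = some y := by
    have : some y ∈ ((W ++ [y]) :: E).map head? := hperm.symm.subset (by simp)
    rcases mem_cons.1 (by simpa only [map_cons] using this) with hy | hy
    · exact absurd (hy.symm.trans (getLast?_concat ..).symm) hopen
    · simpa using hy
  obtain ⟨V, rfl⟩ := head?_eq_some_iff.1 hVy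
  have hE := perm_cons_erase hVE
  refine ⟨(W ++ y :: V) :: E.erase (y :: V), ?_, ⟨?_, ?_⟩, ?_⟩
  · rw [length_cons, length_erase_of_mem hVE, Nat.sub_add_cancel (length_pos_of_mem hVE)]
  · rintro U hU
    rcases mem_cons.1 hU with rfl | hU
    · exact (hwalk _ mem_cons_self).append_cons (hwalk _ (mem_cons_of_mem _ hVE))
    · exact hwalk U (mem_cons_of_mem _ (mem_of_mem_erase hU))
  · have := (((hE.map head?).cons _).symm.trans (hperm.trans ((hE.map getLast?).cons _)))
    rw [map_cons, map_cons, getLast?_concat] at this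
    rw [map_cons, map_cons, getLast?_append_of_ne_nil _ (cons_ne_nil y V),
      show (W ++ y :: V).head? = (W ++ [y]).head? by simp]
    exact ((Perm.swap _ _ _).trans this).cons_inv
  · rw [map_cons, map_cons, sum_cons, sum_cons, walkWeight_append_cons, (hE.map _).sum_eq,
      map_cons, sum_cons, add_assoc]

theorem IsBalancedWalkFamily.sum_walkWeight_nonneg (hγ : ¬ HasNegCycle γ)
    {E : List (List (Option σ))} (h : IsBalancedWalkFamily E) :
    0 ≤ (E.map (walkWeight γ)).sum := by
  induction hn : E.length generalizing E with
  | zero => simp [length_eq_zero_iff.1 hn]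
  | succ n ih =>
    obtain ⟨W, E, rfl⟩ := exists_cons_of_length_eq_add_one hn
    by_cases hW : W.head? = W.getLast?
    · have hE : IsBalancedWalkFamily E :=
        ⟨fun V hV => h.1 V (mem_cons_of_mem _ hV), by simpa [hW] using h.2⟩
      rw [map_cons, sum_cons]
      exact add_nonneg (walkWeight_nonneg_of_head?_eq_getLast? hγ (h.1 W mem_cons_self) hW)
        (ih hE (by simpa using hn))
    · obtain ⟨F, hF, hFb, hsum⟩ := h.exists_merge (γ := γ) hW
      rw [← hsum]
      exact ih hFb (by simpa [hF] using hn)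

end BalancedFamilies

section Alignments

variable {σ : Type*} (γ : Scoring σ)

lemma isAlignment_iff {A : List (Option σ × Option σ)} {s t : List σ} :
    IsAlignment A s t ↔ (∀ c ∈ A, c ≠ (none, none)) ∧
      (A.map Prod.fst).reduceOption = s ∧ (A.map Prod.snd).reduceOption = t := by
  simp only [IsAlignment, reduceOption, filterMap_map, Function.id_comp]

lemma IsAlignment.length_le {A : List (Option σ × Option σ)} {s t : List σ}
    (h : IsAlignment A s t) : A.length ≤ s.length + t.length := by
  obtain ⟨hA, rfl, rfl⟩ := h
  induction A with
  | nil => simp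
  | cons c A ih =>
    have ih := ih fun d hd => hA d (mem_cons_of_mem _ hd)
    obtain ⟨_ | x, _ | y⟩ := c
    · exact absurd rfl (hA _ mem_cons_self)
    all_goals simp only [filterMap_cons, length_cons]; omega

lemma exists_isAlignment (s t : List σ) : ∃ A, IsAlignment A s t :=
  ⟨s.map (fun a => (some a, none)) ++ t.map (fun b => (none, some b)),
    by
      rintro _ hc
      rcases mem_append.1 hc with hc | hc <;> obtain ⟨_, -, rfl⟩ := mem_map.1 hc <;> simp,
    by simp [filterMap_map], by simp [filterMap_map]⟩

lemma finite_setOf_isAlignment [Finite σ] (s t : List σ) : {A | IsAlignment A s t}.Finite :=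
  (List.finite_length_le _ (s.length + t.length)).subset fun _ hA => hA.length_le

lemma editDist_eq_sInf_image (s t : List σ) :
    editDist γ s t = sInf (alignScore γ '' {A | IsAlignment A s t}) := rfl

lemma exists_alignScore_eq_editDist [Finite σ] (s t : List σ) :
    ∃ A, IsAlignment A s t ∧ alignScore γ A = editDist γ s t := by
  rw [editDist_eq_sInf_image]
  exact (Set.Nonempty.image _ (exists_isAlignment s t)).csInf_mem
    ((finite_setOf_isAlignment s t).image _)

lemma editDist_le_alignScore [Finite σ] {A : List (Option σ × Option σ)} {s t : List σ}
    (h : IsAlignment A s t) : editDist γ s t ≤ alignScore γ A :=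
  csInf_le ((finite_setOf_isAlignment s t).image _).bddBelow (Set.mem_image_of_mem _ h)

lemma IsAlignment.eq_of_singleton {A : List (Option σ × Option σ)} {a : σ}
    (h : IsAlignment A [a] [a]) :
    A = [(some a, some a)] ∨ A = [(some a, none), (none, some a)] ∨
      A = [(none, some a), (some a, none)] := by
  have hlen := h.length_le
  obtain ⟨hA, h₁, h₂⟩ := h
  rcases A with _ | ⟨⟨x₁, y₁⟩, _ | ⟨⟨x₂, y₂⟩, _ | ⟨_, _⟩⟩⟩
  · simp at h₁
  · cases x₁ <;> cases y₁ <;> simp_all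
  · cases x₁ <;> cases y₁ <;> cases x₂ <;> cases y₂ <;> simp_all
  · simp at hlen

end Alignments

section SelfAlignments

variable {σ : Type*} (γ : Scoring σ)

lemma IsAlignment.isBalancedWalkFamily {A : List (Option σ × Option σ)} {s : List σ}
    (h : IsAlignment A s s) : IsBalancedWalkFamily (A.map fun c => [c.1, c.2]) := by
  obtain ⟨hA, h₁, h₂⟩ := isAlignment_iff.1 h
  refine ⟨?_, ?_⟩
  · rintro _ hW
    obtain ⟨c, hc, rfl⟩ := mem_map.1 hW
    exact isWalkSeq_cons_cons.2
      ⟨fun hnone => hA c hc (Prod.ext hnone.1 hnone.2), isChain_singleton _⟩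
  · have := (perm_of_reduceOption_eq_of_length_eq (h₁.trans h₂.symm) (by simp)).map some
    simpa [Function.comp_def] using this

lemma alignScore_eq_sum_walkWeight (A : List (Option σ × Option σ)) :
    alignScore γ A = ((A.map fun c => [c.1, c.2]).map (walkWeight γ)).sum := by
  simp [alignScore, Function.comp_def]

theorem alignScore_nonneg_of_isAlignment_self (hγ : ¬ HasNegCycle γ)
    {A : List (Option σ × Option σ)} {s : List σ} (h : IsAlignment A s s) :
    0 ≤ alignScore γ A :=
  (alignScore_eq_sum_walkWeight γ A).symm ▸ h.isBalancedWalkFamily.sum_walkWeight_nonneg hγ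

lemma exists_isAlignment_self_alignScore_eq_zero
    (hdiag : ∀ a : σ, γ (some a) (some a) = 0 ∨ γ (some a) none + γ none (some a) = 0)
    (s : List σ) : ∃ A, IsAlignment A s s ∧ alignScore γ A = 0 := by
  induction s with
  | nil => exact ⟨[], ⟨by simp, rfl, rfl⟩, rfl⟩
  | cons a s ih =>
    obtain ⟨A, ⟨hA, h₁, h₂⟩, hscore⟩ := ih
    rcases hdiag a with ha | ha
    · refine ⟨(some a, some a) :: A, ⟨forall_mem_cons.2 ⟨by simp, hA⟩, ?_, ?_⟩, ?_⟩ <;>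
        simp_all [alignScore]
    · refine ⟨(some a, none) :: (none, some a) :: A,
        ⟨forall_mem_cons.2 ⟨by simp, forall_mem_cons.2 ⟨by simp, hA⟩⟩, ?_, ?_⟩, ?_⟩ <;>
        simp_all [alignScore]

lemma exists_isAlignment_self_of_closed_walk {P : List (Option σ)} {a : σ} (hP : IsWalkSeq P)
    (hhead : P.head? = some (some a)) (hlast : P.getLast? = some (some a)) :
    ∃ A, IsAlignment A P.reduceOption P.reduceOption ∧
      alignScore γ A = γ none (some a) + walkWeight γ P + γ (some a) none := by
  refine ⟨(none, some a) :: P.zip P.tail ++ [(some a, none)], isAlignment_iff.2 ⟨?_, ?_, ?_⟩, ?_⟩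
  · intro c hc hcnone
    rcases mem_append.1 hc with hc | hc
    · rcases mem_cons.1 hc with rfl | hc
      · simp at hcnone
      · exact hP.rel_of_mem_zip_tail hc (by simp [hcnone])
    · simp_all
  · obtain ⟨Q, rfl⟩ := getLast?_eq_some_iff.1 hlast
    simp [map_fst_zip_tail, reduceOption_append]
  · obtain ⟨T, rfl⟩ := head?_eq_some_iff.1 hhead
    simp [map_snd_zip, reduceOption_append]
  · simp only [alignScore, walkWeight, cons_append, map_cons, map_append, map_nil, sum_cons,
      sum_append, sum_nil, add_zero]
    ring

lemma exists_walk_walkWeight_eq_mul {x : Option σ} {W : List (Option σ)}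
    (hC : IsWalkSeq (x :: (W ++ [x]))) (n : ℕ) :
    ∃ P, IsWalkSeq P ∧ P.head? = some x ∧ P.getLast? = some x ∧
      walkWeight γ P = n * walkWeight γ (x :: (W ++ [x])) := by
  induction n with
  | zero => exact ⟨[x], isChain_singleton x, rfl, rfl, by simp⟩
  | succ n ih =>
    obtain ⟨P, hP, hhead, hlast, hw⟩ := ih
    obtain ⟨T, rfl⟩ := head?_eq_some_iff.1 hhead
    refine ⟨(x :: W) ++ x :: T, IsWalkSeq.append_cons (by simpa using hC) hP, by simp, ?_, ?_⟩
    · rwa [getLast?_append_of_ne_nil _ (cons_ne_nil _ _)]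
    · rw [walkWeight_append_cons, hw, cons_append]
      push_cast
      ring

end SelfAlignments

section EditDistSelf

variable {σ : Type*} (γ : Scoring σ)

theorem not_hasNegCycle_of_editDist_self_eq_zero [Finite σ]
    (h : ∀ s : List σ, editDist γ s s = 0) : ¬ HasNegCycle γ := by
  rintro ⟨a, W, hC, hneg⟩
  set w := walkWeight γ (some a :: (W ++ [some a]))
  obtain ⟨n, hn⟩ := exists_nat_gt ((γ none (some a) + γ (some a) none) / -w)
  obtain ⟨P, hP, hhead, hlast, hw⟩ := exists_walk_walkWeight_eq_mul γ hC n
  obtain ⟨A, hA, hscore⟩ := exists_isAlignment_self_of_closed_walk γ hP hhead hlast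
  have hnonneg := (h _).symm.le.trans (editDist_le_alignScore γ hA)
  rw [hscore, hw] at hnonneg
  rw [div_lt_iff₀ (neg_pos.2 hneg)] at hn
  linarith

theorem diag_of_editDist_singleton_eq_zero [Finite σ] {a : σ} (h : editDist γ [a] [a] = 0) :
    γ (some a) (some a) = 0 ∨ γ (some a) none + γ none (some a) = 0 := by
  obtain ⟨A, hA, hscore⟩ := exists_alignScore_eq_editDist γ [a] [a]
  rw [h] at hscore
  rcases hA.eq_of_singleton with rfl | rfl | rfl
  · left; simpa [alignScore] using hscore
  · right; simpa [alignScore] using hscore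
  · right; simpa [alignScore, add_comm] using hscore

theorem editDist_self_eq_zero (hγ : ¬ HasNegCycle γ)
    (hdiag : ∀ a : σ, γ (some a) (some a) = 0 ∨ γ (some a) none + γ none (some a) = 0)
    (s : List σ) : editDist γ s s = 0 := by
  obtain ⟨A, hA, hscore⟩ := exists_isAlignment_self_alignScore_eq_zero γ hdiag s
  refine IsLeast.csInf_eq ⟨⟨A, hA, hscore⟩, ?_⟩
  rintro _ ⟨B, hB, rfl⟩
  exact alignScore_nonneg_of_isAlignment_self γ hγ hB

end EditDistSelf

theorem stmt1 {σ : Type*} [Fintype σ] (γ : Scoring σ) :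
    (∀ s : List σ, editDist γ s s = 0) ↔
      (¬ HasNegCycle γ ∧
        ∀ a : σ, γ (some a) (some a) = 0 ∨ γ (some a) none + γ none (some a) = 0) :=
  ⟨fun h => ⟨not_hasNegCycle_of_editDist_self_eq_zero γ h,
      fun _ => diag_of_editDist_singleton_eq_zero γ (h _)⟩,
    fun ⟨hγ, hdiag⟩ => editDist_self_eq_zero γ hγ hdiag⟩
end

section
/- For every scoring matrix γ: dist_γ(s,t) = dist_γ(t,s) for all s,t ∈ Σ* if and only if (i) γ(a,‐) = γ(‐,a) for every a ∈ Σ, and (ii) for all a,b ∈ Σ, if γ(a,b) < γ(a,‐) + γ(‐,b) then γ(a,b) = γ(b,a). -/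
open List

section Aux
variable {σ : Type*}

lemma align_len (A : List (Option σ × Option σ))
    (h : ∀ c ∈ A, c ≠ ((none : Option σ), (none : Option σ))) :
    A.length ≤ (A.filterMap Prod.fst).length + (A.filterMap Prod.snd).length := by
  induction A with
  | nil => simp
  | cons c rest ih =>
    have hc := h c (List.mem_cons_self ..)
    have ih' := ih (fun x hx => h x (List.mem_cons_of_mem _ hx))
    obtain ⟨c1, c2⟩ := c
    cases c1 <;> cases c2 <;> simp_all [List.filterMap_cons] <;> omega

lemma score_set_finite (γ : Scoring σ) [Fintype σ] (s t : List σ) :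
    {x | ∃ A, IsAlignment A s t ∧ alignScore γ A = x}.Finite := by
  apply Set.Finite.subset (Set.Finite.image (alignScore γ)
    (List.finite_length_le (Option σ × Option σ) (s.length + t.length)))
  rintro x ⟨A, ⟨h1, h2, h3⟩, rfl⟩
  exact ⟨A, by have := align_len A h1; rw [h2, h3] at this; exact this, rfl⟩

lemma canon_align (s t : List σ) :
    IsAlignment ((s.map fun a => ((some a : Option σ), (none : Option σ))) ++
      (t.map fun b => ((none : Option σ), (some b : Option σ)))) s t := by
  refine ⟨?_, ?_, ?_⟩
  · intro c hc
    rcases List.mem_append.1 hc with h | h <;> obtain ⟨y, _, rfl⟩ := List.mem_map.1 h <;> simp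
  · simp [List.filterMap_append, List.filterMap_map, Function.comp_def]
  · simp [List.filterMap_append, List.filterMap_map, Function.comp_def]

lemma score_set_nonempty (γ : Scoring σ) (s t : List σ) :
    {x | ∃ A, IsAlignment A s t ∧ alignScore γ A = x}.Nonempty :=
  ⟨_, _, canon_align s t, rfl⟩

noncomputable def swapA (γ : Scoring σ) : List (Option σ × Option σ) → List (Option σ × Option σ)
  | [] => []
  | (some a, some b) :: rest =>
      if γ (some a) (some b) < γ (some a) none + γ none (some b)
      then (some b, some a) :: swapA γ rest
      else (some b, none) :: (none, some a) :: swapA γ rest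
  | (some a, none) :: rest => (none, some a) :: swapA γ rest
  | (none, b) :: rest => (b, none) :: swapA γ rest

lemma swapA_fst (γ : Scoring σ) (A : List (Option σ × Option σ)) :
    (swapA γ A).filterMap Prod.fst = A.filterMap Prod.snd := by
  induction A with
  | nil => simp [swapA]
  | cons c rest ih =>
    obtain ⟨c1, c2⟩ := c
    cases c1 <;> cases c2 <;> simp [swapA, List.filterMap_cons, ih]
    split <;> simp [List.filterMap_cons, ih]

lemma swapA_snd (γ : Scoring σ) (A : List (Option σ × Option σ)) :
    (swapA γ A).filterMap Prod.snd = A.filterMap Prod.fst := by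
  induction A with
  | nil => simp [swapA]
  | cons c rest ih =>
    obtain ⟨c1, c2⟩ := c
    cases c1 <;> cases c2 <;> simp [swapA, List.filterMap_cons, ih]
    split <;> simp [List.filterMap_cons, ih]

lemma swapA_nn (γ : Scoring σ) (A : List (Option σ × Option σ))
    (h : ∀ c ∈ A, c ≠ ((none : Option σ), (none : Option σ))) :
    ∀ c ∈ swapA γ A, c ≠ ((none : Option σ), (none : Option σ)) := by
  induction A with
  | nil => simp [swapA]
  | cons c rest ih =>
    have hc := h c (List.mem_cons_self ..)
    have ih' := ih (fun x hx => h x (List.mem_cons_of_mem _ hx))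
    obtain ⟨c1, c2⟩ := c
    cases c1 <;> cases c2
    · simp at hc
    · intro x hx
      simp only [swapA, List.mem_cons] at hx
      rcases hx with rfl | hx
      · simp
      · exact ih' x hx
    · intro x hx
      simp only [swapA, List.mem_cons] at hx
      rcases hx with rfl | hx
      · simp
      · exact ih' x hx
    · intro x hx
      simp only [swapA] at hx
      split at hx <;> simp only [List.mem_cons] at hx
      · rcases hx with rfl | hx
        · simp
        · exact ih' x hx
      · rcases hx with rfl | rfl | hx
        · simp
        · simp
        · exact ih' x hx

lemma swapA_score (γ : Scoring σ)
    (h1 : ∀ a : σ, γ (some a) none = γ none (some a))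
    (h2 : ∀ a b : σ, γ (some a) (some b) < γ (some a) none + γ none (some b) →
          γ (some a) (some b) = γ (some b) (some a))
    (A : List (Option σ × Option σ))
    (h : ∀ c ∈ A, c ≠ ((none : Option σ), (none : Option σ))) :
    alignScore γ (swapA γ A) ≤ alignScore γ A := by
  induction A with
  | nil => simp [swapA, alignScore]
  | cons c rest ih =>
    have hc := h c (List.mem_cons_self ..)
    have ih' := ih (fun x hx => h x (List.mem_cons_of_mem _ hx))
    simp only [alignScore] at ih' ⊢
    obtain ⟨c1, c2⟩ := c
    cases c1 <;> cases c2
    · simp at hc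
    · rename_i b
      simp only [swapA, List.map_cons, List.sum_cons]
      have := h1 b
      linarith
    · rename_i a
      simp only [swapA, List.map_cons, List.sum_cons]
      have := h1 a
      linarith
    · rename_i a b
      by_cases hlt : γ (some a) (some b) < γ (some a) none + γ none (some b)
      · simp only [swapA, if_pos hlt, List.map_cons, List.sum_cons]
        have := h2 a b hlt
        linarith
      · simp only [swapA, if_neg hlt, List.map_cons, List.sum_cons]
        push_neg at hlt
        have e1 := h1 a
        have e2 := h1 b
        linarith

lemma editDist_symm_of (γ : Scoring σ)
    (h1 : ∀ a : σ, γ (some a) none = γ none (some a))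
    (h2 : ∀ a b : σ, γ (some a) (some b) < γ (some a) none + γ none (some b) →
          γ (some a) (some b) = γ (some b) (some a))
    (s t : List σ) : editDist γ s t = editDist γ t s := by
  have key : ∀ u v : List σ, ∀ x ∈ {x | ∃ A, IsAlignment A u v ∧ alignScore γ A = x},
      ∃ y ∈ {x | ∃ A, IsAlignment A v u ∧ alignScore γ A = x}, y ≤ x := by
    rintro u v x ⟨A, ⟨hA1, hA2, hA3⟩, rfl⟩
    exact ⟨alignScore γ (swapA γ A),
      ⟨swapA γ A, ⟨fun c hc => swapA_nn γ A hA1 c hc,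
        by rw [swapA_fst, hA3], by rw [swapA_snd, hA2]⟩, rfl⟩,
      swapA_score γ h1 h2 A hA1⟩
  exact csInf_eq_csInf_of_forall_exists_le (key s t) (key t s)

lemma align_single (a : σ) (A : List (Option σ × Option σ))
    (h : IsAlignment A [a] []) : A = [((some a : Option σ), (none : Option σ))] := by
  obtain ⟨h1, h2, h3⟩ := h
  have hsnd : ∀ c ∈ A, c.2 = none := List.forall_none_of_filterMap_eq_nil h3
  match A with
  | [] => simp at h2
  | (c1, c2) :: rest =>
    have hc2 : c2 = none := hsnd _ (List.mem_cons_self ..)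
    subst hc2
    cases c1 with
    | none => exact absurd rfl (h1 _ (List.mem_cons_self ..))
    | some x =>
      simp only [List.filterMap_cons] at h2
      simp at h2
      obtain ⟨rfl, hrest⟩ := h2
      have : rest = [] := by
        cases rest with
        | nil => rfl
        | cons d rest' =>
          obtain ⟨d1, d2⟩ := d
          have e2 : d2 = none := hsnd (d1, d2) (by simp)
          have e1 : d1 = none := hrest d1 d2 (by simp)
          exact absurd (by rw [e1, e2]) (h1 (d1, d2) (by simp))
      rw [this]

lemma align_pair (a b : σ) (A : List (Option σ × Option σ))
    (h : IsAlignment A [a] [b]) :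
    A = [(some a, some b)] ∨ A = [(some a, none), (none, some b)] ∨
      A = [(none, some b), (some a, none)] := by
  obtain ⟨h1, h2, h3⟩ := h
  have hlen : A.length ≤ 2 := by
    have := align_len A h1
    rw [h2, h3] at this
    simpa using this
  match A with
  | [] => simp at h2
  | [(c1, c2)] =>
    cases c1 <;> cases c2 <;> simp_all [List.filterMap_cons]
  | [(c1, c2), (d1, d2)] =>
    have hc := h1 (c1, c2) (by simp)
    have hd := h1 (d1, d2) (by simp)
    cases c1 <;> cases c2 <;> cases d1 <;> cases d2 <;> simp_all [List.filterMap_cons]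
  | (c :: d :: e :: rest) => simp at hlen

lemma align_single' (a : σ) (A : List (Option σ × Option σ))
    (h : IsAlignment A [] [a]) : A = [((none : Option σ), (some a : Option σ))] := by
  obtain ⟨h1, h2, h3⟩ := h
  have hfst : ∀ c ∈ A, c.1 = none := List.forall_none_of_filterMap_eq_nil h2
  match A with
  | [] => simp at h3
  | (c1, c2) :: rest =>
    have hc1 : c1 = none := hfst _ (List.mem_cons_self ..)
    subst hc1
    cases c2 with
    | none => exact absurd rfl (h1 _ (List.mem_cons_self ..))
    | some x =>
      simp only [List.filterMap_cons] at h3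
      simp at h3
      obtain ⟨rfl, hrest⟩ := h3
      have : rest = [] := by
        cases rest with
        | nil => rfl
        | cons d rest' =>
          obtain ⟨d1, d2⟩ := d
          have e1 : d1 = none := hfst (d1, d2) (by simp)
          have e2 : d2 = none := hrest d1 d2 (by simp)
          exact absurd (by rw [e1, e2]) (h1 (d1, d2) (by simp))
      rw [this]

lemma score_single (γ : Scoring σ) (a : σ) : editDist γ [a] [] = γ (some a) none := by
  have hset : {x | ∃ A, IsAlignment A [a] [] ∧ alignScore γ A = x} = {γ (some a) none} := by
    ext x
    constructor
    · rintro ⟨A, hA, rfl⟩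
      rw [align_single a A hA]
      simp [alignScore]
    · rintro rfl
      exact ⟨[(some a, none)], ⟨by simp, by simp [List.filterMap_cons],
        by simp [List.filterMap_cons]⟩, by simp [alignScore]⟩
  rw [editDist, hset, csInf_singleton]

lemma score_single' (γ : Scoring σ) (a : σ) : editDist γ [] [a] = γ none (some a) := by
  have hset : {x | ∃ A, IsAlignment A [] [a] ∧ alignScore γ A = x} = {γ none (some a)} := by
    ext x
    constructor
    · rintro ⟨A, hA, rfl⟩
      rw [align_single' a A hA]
      simp [alignScore]
    · rintro rfl
      exact ⟨[(none, some a)], ⟨by simp, by simp [List.filterMap_cons],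
        by simp [List.filterMap_cons]⟩, by simp [alignScore]⟩
  rw [editDist, hset, csInf_singleton]

lemma score_pair (γ : Scoring σ) (a b : σ) :
    editDist γ [a] [b] = min (γ (some a) (some b))
      (min (γ (some a) none + γ none (some b)) (γ none (some b) + γ (some a) none)) := by
  have hset : {x | ∃ A, IsAlignment A [a] [b] ∧ alignScore γ A = x} =
      insert (γ (some a) (some b)) (insert (γ (some a) none + γ none (some b))
        {γ none (some b) + γ (some a) none}) := by
    ext x
    constructor
    · rintro ⟨A, hA, rfl⟩
      rcases align_pair a b A hA with rfl | rfl | rfl <;> simp [alignScore]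
    · intro hx
      rcases hx with rfl | rfl | rfl
      · exact ⟨[(some a, some b)], ⟨by simp, by simp [List.filterMap_cons],
          by simp [List.filterMap_cons]⟩, by simp [alignScore]⟩
      · exact ⟨[(some a, none), (none, some b)], ⟨by simp, by simp [List.filterMap_cons],
          by simp [List.filterMap_cons]⟩, by simp [alignScore]⟩
      · exact ⟨[(none, some b), (some a, none)], ⟨by simp, by simp [List.filterMap_cons],
          by simp [List.filterMap_cons]⟩, by simp [alignScore]⟩
  rw [editDist, hset]
  rw [csInf_insert (((Set.finite_singleton _).insert _).bddBelow) ⟨_, Set.mem_insert _ _⟩,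
    csInf_insert ((Set.finite_singleton _).bddBelow) ⟨_, rfl⟩, csInf_singleton]

end Aux

theorem stmt4 {σ : Type*} [Fintype σ] (γ : Scoring σ) :
    (∀ s t : List σ, editDist γ s t = editDist γ t s) ↔
      ((∀ a : σ, γ (some a) none = γ none (some a)) ∧
       (∀ a b : σ, γ (some a) (some b) < γ (some a) none + γ none (some b) →
          γ (some a) (some b) = γ (some b) (some a))) := by
  constructor
  · intro hsym
    have h1 : ∀ a : σ, γ (some a) none = γ none (some a) := by
      intro a
      have := hsym [a] []
      rwa [score_single, score_single'] at this
    refine ⟨h1, ?_⟩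
    intro a b hlt
    have e := hsym [a] [b]
    rw [score_pair, score_pair] at e
    rw [h1 a, h1 b] at e
    rw [h1 a] at hlt
    rw [add_comm (γ none (some b)) (γ none (some a))] at e
    rw [inf_idem] at e
    rw [inf_eq_left.mpr hlt.le] at e
    rcases le_total (γ (some b) (some a)) (γ none (some a) + γ none (some b)) with h | h
    · rw [inf_eq_left.mpr h] at e; exact e
    · rw [inf_eq_right.mpr h] at e; linarith
  · rintro ⟨h1, h2⟩ s t
    exact editDist_symm_of γ h1 h2 s t
end
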